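/- arXiv:2201.07979 — 2 statements merged into one kernel-verified Lean document; each statement's English description precedes it below -/
import Mathlib

section
/- Ephemeris-time reparametrization yields Newton's second law: let N ≥ 1, let m_1,…,m_N be positive reals, let U ⊆ (ℝ³)^N be open, let V : U → ℝ be continuously differentiable, let J ⊆ ℝ be an open interval, let f : J → ℝ be positive and continuously differentiable, and let q : J → U be twice differentiable satisfying, for each I and all λ ∈ J, d/dλ (f(λ) · m_I q_I′(λ)) = −(1/f(λ)) · ∇_{q_I} V(q(λ)). Let t : J → ℝ be a primitive of 1/f (so t′ = 1/f > 0, and t is a C¹ bijection onto the interval t(J) with inverse s). Then the reparametrized curve r := q ∘ s satisfies Newton's second law: m_I r̈_I(τ) = −∇_{q_I} V(r(τ)) for all I and all τ ∈ t(J). -/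
/-!
The Euler–Lagrange equation says that the momentum `f · m_I q_I′` has `λ`-derivative
`−f⁻¹ ∇_I V`. Since `τ′ = 1/f` is continuous and nonzero, the inverse function theorem makes the
left inverse `s` differentiable with `s′ = f ∘ s`. By the chain rule `r′ = (f · q′) ∘ s`, so
`m_I r′_I = (f · m_I q_I′) ∘ s` near every point of `τ(J)`, and differentiating once more gives
`m_I r̈_I = (f · (−f⁻¹ ∇_I V)) ∘ s = −∇_I V ∘ r`.
-/

open Topology Filter

/-- The gradient of `V` with respect to the position of particle `I`, the other particles
being held fixed. -/
noncomputable def particleGrad (N : ℕ)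
    (V : (Fin N → EuclideanSpace ℝ (Fin 3)) → ℝ)
    (x : Fin N → EuclideanSpace ℝ (Fin 3)) (I : Fin N) : EuclideanSpace ℝ (Fin 3) :=
  gradient (fun y => V (Function.update x I y)) (x I)

theorem hasStrictDerivAt_of_hasDerivAt_of_continuousOn {E : Type*} [NormedAddCommGroup E]
    [NormedSpace ℝ E] {J : Set ℝ} (hJ : IsOpen J) {τ τ' : ℝ → E}
    (hτ : ∀ l ∈ J, HasDerivAt τ (τ' l) l) (hτ' : ContinuousOn τ' J) {l : ℝ} (hl : l ∈ J) :
    HasStrictDerivAt τ (τ' l) l :=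
  hasStrictDerivAt_of_hasDerivAt_of_continuousAt (eventually_of_mem (hJ.mem_nhds hl) hτ)
    (hτ'.continuousAt (hJ.mem_nhds hl))

section LeftInverse

variable {J : Set ℝ} (hJ : IsOpen J) {τ τ' s : ℝ → ℝ}
  (hτ : ∀ l ∈ J, HasStrictDerivAt τ (τ' l) l) (hτ' : ∀ l ∈ J, τ' l ≠ 0)
  (hs : ∀ l ∈ J, s (τ l) = l)
include hJ hτ hτ' hs

theorem hasDerivAt_leftInverse {l : ℝ} (hl : l ∈ J) : HasDerivAt s (τ' l)⁻¹ (τ l) :=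
  ((hτ l hl).to_local_left_inverse (hτ' l hl) (eventually_of_mem (hJ.mem_nhds hl) hs)).hasDerivAt

omit hs in
theorem image_mem_nhds_of_hasStrictDerivAt {l : ℝ} (hl : l ∈ J) : τ '' J ∈ 𝓝 (τ l) := by
  rw [← (hτ l hl).map_nhds_eq (hτ' l hl)]
  exact image_mem_map (hJ.mem_nhds hl)

variable {E : Type*} [NormedAddCommGroup E] [NormedSpace ℝ E]

theorem hasDerivAt_comp_leftInverse {g : ℝ → E} {g' : E} {l : ℝ} (hl : l ∈ J)
    (hg : HasDerivAt g g' l) : HasDerivAt (fun σ => g (s σ)) ((τ' l)⁻¹ • g') (τ l) :=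
  HasDerivAt.scomp (τ l) (by rwa [hs l hl]) (hasDerivAt_leftInverse hJ hτ hτ' hs hl)

theorem deriv_comp_leftInverse_eventuallyEq {g g' : ℝ → E} (hg : ∀ l ∈ J, HasDerivAt g (g' l) l)
    {l : ℝ} (hl : l ∈ J) :
    deriv (fun σ => g (s σ)) =ᶠ[𝓝 (τ l)] fun σ => (τ' (s σ))⁻¹ • g' (s σ) := by
  filter_upwards [image_mem_nhds_of_hasStrictDerivAt hJ hτ hτ' hl] with σ ⟨k, hk, hkσ⟩
  subst hkσ
  rw [(hasDerivAt_comp_leftInverse hJ hτ hτ' hs hk (hg k hk)).deriv, hs k hk]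

end LeftInverse

theorem ephemeris_time_newton_general (N : ℕ) (m : Fin N → ℝ)
    (V : (Fin N → EuclideanSpace ℝ (Fin 3)) → ℝ)
    (J : Set ℝ) (hJo : IsOpen J)
    (f : ℝ → ℝ) (hfpos : ∀ l ∈ J, 0 < f l) (hf : ContDiffOn ℝ 1 f J)
    (q v : ℝ → Fin N → EuclideanSpace ℝ (Fin 3))
    (hq : ∀ I, ∀ l ∈ J, HasDerivAt (fun u => q u I) (v l I) l)
    (heq : ∀ I, ∀ l ∈ J,
      HasDerivAt (fun u => (f u * m I) • v u I) (-(f l)⁻¹ • particleGrad N V (q l) I) l)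
    (τ s : ℝ → ℝ)
    (hτ : ∀ l ∈ J, HasDerivAt τ (1 / f l) l)
    (hs : ∀ l ∈ J, s (τ l) = l) :
    ∀ I, ∀ σ ∈ τ '' J,
      m I • deriv (deriv fun u => q (s u) I) σ = -particleGrad N V (q (s σ)) I := by
  rintro I _ ⟨l, hl, rfl⟩
  have hf0 : ∀ l ∈ J, f l ≠ 0 := fun l hl => (hfpos l hl).ne'
  have hτ' : ∀ l ∈ J, 1 / f l ≠ 0 := fun l hl => one_div_ne_zero (hf0 l hl)
  have hτs : ∀ l ∈ J, HasStrictDerivAt τ (1 / f l) l := fun l hl =>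
    hasStrictDerivAt_of_hasDerivAt_of_continuousOn hJo hτ
      (continuousOn_const.div hf.continuousOn hf0) hl
  have hmomentum :
      m I • deriv (fun u => q (s u) I) =ᶠ[𝓝 (τ l)] fun σ => (f (s σ) * m I) • v (s σ) I := by
    filter_upwards [deriv_comp_leftInverse_eventuallyEq hJo hτs hτ' hs (hq I) hl] with σ hσ
    rw [Pi.smul_apply, hσ, one_div, inv_inv, smul_smul, mul_comm]
  have hforce := hasDerivAt_comp_leftInverse hJo hτs hτ' hs hl (heq I l hl)
  rw [← deriv_const_smul_field, hmomentum.deriv_eq, hforce.deriv, hs l hl, one_div, inv_inv,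
    smul_smul, mul_neg, mul_inv_cancel₀ (hf0 l hl), neg_smul, one_smul]

/-- **ephemeris time yields Newton's second law.** Suppose `q` satisfies the
Euler–Lagrange equations of Jacobi's timeless action in the form
`d/dλ (f(λ) · m_I q_I′(λ)) = −(1/f(λ)) ∇_{q_I} V(q(λ))` on an open interval `J`, where
`f > 0` is `C¹` on `J`.  Let `τ` be a primitive of `1/f` on `J` and let `s` be its inverse.
Then the reparametrized curve `r = q ∘ s` satisfies Newton's second law
`m_I r̈_I(σ) = −∇_{q_I} V(r(σ))` for all `σ ∈ τ(J)`. -/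
theorem ephemeris_time_newton (N : ℕ) (hN : 1 ≤ N) (m : Fin N → ℝ) (hm : ∀ I, 0 < m I)
    (U : Set (Fin N → EuclideanSpace ℝ (Fin 3))) (hUo : IsOpen U)
    (V : (Fin N → EuclideanSpace ℝ (Fin 3)) → ℝ) (hV : ContDiffOn ℝ 1 V U)
    (J : Set ℝ) (hJo : IsOpen J) (hJc : J.OrdConnected)
    (f : ℝ → ℝ) (hfpos : ∀ l ∈ J, 0 < f l) (hf : ContDiffOn ℝ 1 f J)
    (q v : ℝ → Fin N → EuclideanSpace ℝ (Fin 3))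
    (hqU : ∀ l ∈ J, q l ∈ U)
    (hq : ∀ I, ∀ l ∈ J, HasDerivAt (fun u => q u I) (v l I) l)
    (heq : ∀ I, ∀ l ∈ J,
      HasDerivAt (fun u => (f u * m I) • v u I) (-(f l)⁻¹ • particleGrad N V (q l) I) l)
    (τ s : ℝ → ℝ)
    (hτ : ∀ l ∈ J, HasDerivAt τ (1 / f l) l)
    (hs : ∀ l ∈ J, s (τ l) = l) :
    ∀ I, ∀ σ ∈ τ '' J,
      m I • deriv (deriv fun u => q (s u) I) σ = -particleGrad N V (q (s σ)) I :=
  ephemeris_time_newton_general N m V J hJo f hfpos hf q v hq heq τ s hτ hs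
end

section
/- Poincaré's defect — relational initial data do not determine Newtonian evolution: there exist ε > 0 and two twice differentiable curves q, q̂ : [0, ε) → ℝ³ × ℝ³, each solving the equal-mass two-body gravitational equations q̈₁(t) = (q₂(t) − q₁(t))/‖q₂(t) − q₁(t)‖³ and q̈₂(t) = (q₁(t) − q₂(t))/‖q₁(t) − q₂(t)‖³ with q₁(t) ≠ q₂(t) throughout, such that the separation functions r(t) = ‖q₁(t) − q₂(t)‖ and r̂(t) = ‖q̂₁(t) − q̂₂(t)‖ satisfy r(0) = r̂(0) and r′(0) = r̂′(0) = 0, and yet r(t₀) ≠ r̂(t₀) for some t₀ ∈ (0, ε). -/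
/-!
Put the bodies at `c` and `-c`; the equal-mass two-body equations then reduce to the central-force
equation `c̈ = -c / (4 ‖c‖³)`. It is solved by the unit circle traversed with angular frequency
`1/2`, and also by a head-on motion `c = x e₀`, where `ẍ = -1 / (4 x²)`, `x(0) = 1`, `ẋ(0) = 0`
(a local solution from Picard–Lindelöf). Both have separation `r(0) = 2` and `ṙ(0) = 0`. But
`ẍ < 0` together with `ẋ(0) = 0` makes `x` strictly decreasing, so the head-on separation drops
below `2`, while the circular one stays `2`.
-/

open Real Set

def IsTwoBodySolution {E : Type*} [NormedAddCommGroup E] [NormedSpace ℝ E]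
    (s : Set ℝ) (q v a : ℝ → Fin 2 → E) : Prop :=
  (∀ t ∈ s, q t 0 ≠ q t 1) ∧
  (∀ I, ∀ t ∈ s, HasDerivAt (fun u => q u I) (v t I) t) ∧
  (∀ I, ∀ t ∈ s, HasDerivAt (fun u => v u I) (a t I) t) ∧
  (∀ I K : Fin 2, K ≠ I → ∀ t ∈ s, a t I = (‖q t K - q t I‖ ^ 3)⁻¹ • (q t K - q t I))

section NormedSpace

variable {E : Type*} [NormedAddCommGroup E] [NormedSpace ℝ E]

lemma norm_sub_neg_self (x : E) : ‖x - -x‖ = 2 * ‖x‖ := by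
  rw [sub_neg_eq_add, ← two_smul ℝ, norm_smul, Real.norm_two]

lemma norm_antipodal_sub (x : E) : ‖(![x, -x] : Fin 2 → E) 0 - ![x, -x] 1‖ = 2 * ‖x‖ :=
  norm_sub_neg_self x

lemma inv_norm_pow_three_smul_neg_sub_self (x : E) :
    (‖-x - x‖ ^ 3)⁻¹ • (-x - x) = -(4 * ‖x‖ ^ 3)⁻¹ • x := by
  have h : -x - x = (-2 : ℝ) • x := by module
  rw [h, norm_smul, smul_smul]
  norm_num
  ring_nf

theorem isTwoBodySolution_antipodal {s : Set ℝ} {c w b : ℝ → E}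
    (hc : ∀ t ∈ s, c t ≠ 0) (hcw : ∀ t ∈ s, HasDerivAt c (w t) t)
    (hwb : ∀ t ∈ s, HasDerivAt w (b t) t) (hb : ∀ t ∈ s, b t = -(4 * ‖c t‖ ^ 3)⁻¹ • c t) :
    IsTwoBodySolution s (fun t => ![c t, -c t]) (fun t => ![w t, -w t])
      (fun t => ![b t, -b t]) := by
  refine ⟨fun t ht h => ?_, ?_, ?_, ?_⟩
  · have hneg : c t = -c t := h
    have hsep := norm_sub_neg_self (c t)
    rw [sub_eq_zero.mpr hneg, norm_zero] at hsep
    exact hc t ht (norm_eq_zero.mp (by linarith))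
  · intro I t ht
    fin_cases I
    · exact hcw t ht
    · exact (hcw t ht).neg
  · intro I t ht
    fin_cases I
    · exact hwb t ht
    · exact (hwb t ht).neg
  · intro I K hKI t ht
    fin_cases I <;> fin_cases K <;> simp only [Fin.zero_eta, Fin.mk_one, Matrix.cons_val_zero,
      Matrix.cons_val_one, ne_eq, not_true_eq_false] at hKI ⊢
    · rw [hb t ht, inv_norm_pow_three_smul_neg_sub_self]
    · rw [hb t ht, ← smul_neg, ← norm_neg (c t), ← inv_norm_pow_three_smul_neg_sub_self, neg_neg]

theorem isTwoBodySolution_radial {s : Set ℝ} {e : E} (he : ‖e‖ = 1) {x p : ℝ → ℝ}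
    (hx : ∀ t ∈ s, 0 < x t) (hxp : ∀ t ∈ s, HasDerivAt x (p t) t)
    (hp : ∀ t ∈ s, HasDerivAt p (-(4 * x t ^ 2)⁻¹) t) :
    IsTwoBodySolution s (fun t => ![x t • e, -(x t • e)]) (fun t => ![p t • e, -(p t • e)])
      (fun t => ![-(4 * x t ^ 2)⁻¹ • e, -(-(4 * x t ^ 2)⁻¹ • e)]) := by
  refine isTwoBodySolution_antipodal (fun t ht => ?_) (fun t ht => (hxp t ht).smul_const e)
    (fun t ht => (hp t ht).smul_const e) (fun t ht => ?_)
  · rw [← norm_ne_zero_iff, norm_smul, he, mul_one, Real.norm_of_nonneg (hx t ht).le]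
    exact (hx t ht).ne'
  · rw [norm_smul, he, mul_one, Real.norm_of_nonneg (hx t ht).le, smul_smul]
    congr 1
    field_simp [(hx t ht).ne']

noncomputable def uniformCircularMotion (e₀ e₁ : E) (ω t : ℝ) : E :=
  cos (ω * t) • e₀ + sin (ω * t) • e₁

lemma uniformCircularMotion_neg (e₀ e₁ : E) (ω t : ℝ) :
    uniformCircularMotion (-e₀) (-e₁) ω t = -uniformCircularMotion e₀ e₁ ω t := by
  simp only [uniformCircularMotion, smul_neg, neg_add]

lemma hasDerivAt_uniformCircularMotion (e₀ e₁ : E) (ω t : ℝ) :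
    HasDerivAt (uniformCircularMotion e₀ e₁ ω) (ω • uniformCircularMotion e₁ (-e₀) ω t) t := by
  have hθ : HasDerivAt (fun t => ω * t) ω t := by simpa using (hasDerivAt_id t).const_mul ω
  exact ((hθ.cos.smul_const e₀).add (hθ.sin.smul_const e₁)).congr_deriv
    (by simp only [uniformCircularMotion]; module)

end NormedSpace

section InnerProductSpace

variable {F : Type*} [NormedAddCommGroup F] [InnerProductSpace ℝ F] {e₀ e₁ : F}

lemma norm_uniformCircularMotion (h₀ : ‖e₀‖ = 1) (h₁ : ‖e₁‖ = 1) (h₀₁ : inner ℝ e₀ e₁ = 0)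
    (ω t : ℝ) : ‖uniformCircularMotion e₀ e₁ ω t‖ = 1 := by
  set θ := ω * t
  have horth : inner ℝ (cos θ • e₀) (sin θ • e₁) = 0 := by
    rw [real_inner_smul_left, real_inner_smul_right, h₀₁, mul_zero, mul_zero]
  have hsq : ‖cos θ • e₀ + sin θ • e₁‖ * ‖cos θ • e₀ + sin θ • e₁‖ = 1 := by
    rw [norm_add_sq_eq_norm_sq_add_norm_sq_real horth, norm_smul, norm_smul, h₀, h₁, mul_one,
      mul_one, Real.norm_eq_abs, Real.norm_eq_abs, abs_mul_abs_self, abs_mul_abs_self, ← sq, ← sq,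
      cos_sq_add_sin_sq]
  exact (mul_self_eq_one_iff.mp hsq).resolve_right
    (by linarith [norm_nonneg (cos θ • e₀ + sin θ • e₁)])

/-- Frequency `1/2` is Kepler's third law `4 r³ ω² = 1` for the reduced equation at radius `1`. -/
theorem isTwoBodySolution_uniformCircularMotion (h₀ : ‖e₀‖ = 1) (h₁ : ‖e₁‖ = 1)
    (h₀₁ : inner ℝ e₀ e₁ = 0) (s : Set ℝ) :
    IsTwoBodySolution s
      (fun t => ![uniformCircularMotion e₀ e₁ (1 / 2) t, -uniformCircularMotion e₀ e₁ (1 / 2) t])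
      (fun t => ![(1 / 2 : ℝ) • uniformCircularMotion e₁ (-e₀) (1 / 2) t,
        -((1 / 2 : ℝ) • uniformCircularMotion e₁ (-e₀) (1 / 2) t)])
      (fun t => ![(1 / 2 : ℝ) • (1 / 2 : ℝ) • uniformCircularMotion (-e₀) (-e₁) (1 / 2) t,
        -((1 / 2 : ℝ) • (1 / 2 : ℝ) • uniformCircularMotion (-e₀) (-e₁) (1 / 2) t)]) := by
  refine isTwoBodySolution_antipodal (fun t _ => ?_)
    (fun t _ => hasDerivAt_uniformCircularMotion e₀ e₁ _ t)
    (fun t _ => (hasDerivAt_uniformCircularMotion e₁ (-e₀) _ t).const_smul _) (fun t _ => ?_)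
  · rw [← norm_ne_zero_iff, norm_uniformCircularMotion h₀ h₁ h₀₁]
    exact one_ne_zero
  · rw [norm_uniformCircularMotion h₀ h₁ h₀₁, uniformCircularMotion_neg, smul_smul, smul_neg,
      ← neg_smul]
    norm_num

end InnerProductSpace

theorem exists_radialKepler_local_solution (x₀ v₀ : ℝ) (hx₀ : 0 < x₀) :
    ∃ ε > 0, ∃ x p : ℝ → ℝ, x 0 = x₀ ∧ p 0 = v₀ ∧
      ∀ t ∈ Ioo (-ε) ε, 0 < x t ∧ HasDerivAt x (p t) t ∧ HasDerivAt p (-(4 * x t ^ 2)⁻¹) t := by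
  have hf : ContDiffAt ℝ 1 (fun y : ℝ × ℝ => (y.2, -(4 * y.1 ^ 2)⁻¹)) (x₀, v₀) := by
    refine contDiffAt_snd.prodMk (ContDiffAt.neg (ContDiffAt.inv ?_ ?_))
    · exact (contDiffAt_fst.pow 2).const_smul (4 : ℝ)
    · positivity
  obtain ⟨α, hα0, ε₁, hε₁, hα⟩ :=
    hf.exists_forall_mem_closedBall_exists_eq_forall_mem_Ioo_hasDerivAt₀ 0
  rw [zero_sub, zero_add] at hα
  have hx : ∀ t ∈ Ioo (-ε₁) ε₁, HasDerivAt (fun t => (α t).1) (α t).2 t :=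
    fun t ht => (hα t ht).fst
  have hp : ∀ t ∈ Ioo (-ε₁) ε₁, HasDerivAt (fun t => (α t).2) (-(4 * (α t).1 ^ 2)⁻¹) t :=
    fun t ht => (hα t ht).snd
  have hxc : ContinuousAt (fun t => (α t).1) 0 :=
    (hx 0 ⟨neg_lt_zero.mpr hε₁, hε₁⟩).continuousAt
  obtain ⟨δ, hδ, hpos⟩ := Metric.eventually_nhds_iff.mp
    (hxc.eventually (lt_mem_nhds (by simpa [hα0] using hx₀ : (0 : ℝ) < (α 0).1)))
  refine ⟨min ε₁ δ, lt_min hε₁ hδ, fun t => (α t).1, fun t => (α t).2, by simp [hα0],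
    by simp [hα0], fun t ht => ⟨hpos ?_, hx t ?_, hp t ?_⟩⟩
  · rw [Real.dist_0_eq_abs, abs_lt]
    exact ⟨(neg_le_neg (min_le_right _ _)).trans_lt ht.1, ht.2.trans_le (min_le_right _ _)⟩
  all_goals exact ⟨(neg_le_neg (min_le_left _ _)).trans_lt ht.1, ht.2.trans_le (min_le_left _ _)⟩

theorem strictAntiOn_Ico_of_hasDerivAt_of_hasDerivAt_neg {ε : ℝ} {x p p' : ℝ → ℝ}
    (hxp : ∀ t ∈ Ico 0 ε, HasDerivAt x (p t) t) (hpp' : ∀ t ∈ Ico 0 ε, HasDerivAt p (p' t) t)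
    (hp' : ∀ t ∈ Ico 0 ε, p' t < 0) (hp0 : p 0 ≤ 0) : StrictAntiOn x (Ico 0 ε) := by
  have hp_anti : StrictAntiOn p (Ico 0 ε) :=
    strictAntiOn_of_hasDerivWithinAt_neg (convex_Ico 0 ε)
      (fun t ht => (hpp' t ht).continuousAt.continuousWithinAt)
      (fun t ht => (hpp' t (interior_subset ht)).hasDerivWithinAt)
      (fun t ht => hp' t (interior_subset ht))
  refine strictAntiOn_of_hasDerivWithinAt_neg (convex_Ico 0 ε)
    (fun t ht => (hxp t ht).continuousAt.continuousWithinAt)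
    (fun t ht => (hxp t (interior_subset ht)).hasDerivWithinAt) (fun t ht => ?_)
  rw [interior_Ico] at ht
  exact (hp_anti ⟨le_rfl, ht.1.trans ht.2⟩ ⟨ht.1.le, ht.2⟩ ht.1).trans_le hp0

/-- **Poincaré's defect.** There exist `ε > 0` and two solutions of the
equal-mass two-body gravitational equations on `[0, ε)` (with positions, velocities and
accelerations `q, v, a` and `qh, vh, ah`, and distinct particle positions throughout) whose
separation functions have identical relational initial data — `r(0) = r̂(0)` and
`r′(0) = r̂′(0) = 0` — and yet differ at some later time `t₀ ∈ (0, ε)`. -/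
theorem relational_data_insufficient :
    ∃ ε : ℝ, 0 < ε ∧
      ∃ q qh v vh a ah : ℝ → Fin 2 → EuclideanSpace ℝ (Fin 3),
        (∀ t ∈ Set.Ico (0 : ℝ) ε, q t 0 ≠ q t 1) ∧
        (∀ t ∈ Set.Ico (0 : ℝ) ε, qh t 0 ≠ qh t 1) ∧
        (∀ I, ∀ t ∈ Set.Ico (0 : ℝ) ε, HasDerivAt (fun u => q u I) (v t I) t) ∧
        (∀ I, ∀ t ∈ Set.Ico (0 : ℝ) ε, HasDerivAt (fun u => v u I) (a t I) t) ∧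
        (∀ I K : Fin 2, K ≠ I → ∀ t ∈ Set.Ico (0 : ℝ) ε,
          a t I = (‖q t K - q t I‖ ^ 3)⁻¹ • (q t K - q t I)) ∧
        (∀ I, ∀ t ∈ Set.Ico (0 : ℝ) ε, HasDerivAt (fun u => qh u I) (vh t I) t) ∧
        (∀ I, ∀ t ∈ Set.Ico (0 : ℝ) ε, HasDerivAt (fun u => vh u I) (ah t I) t) ∧
        (∀ I K : Fin 2, K ≠ I → ∀ t ∈ Set.Ico (0 : ℝ) ε,
          ah t I = (‖qh t K - qh t I‖ ^ 3)⁻¹ • (qh t K - qh t I)) ∧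
        ‖q 0 0 - q 0 1‖ = ‖qh 0 0 - qh 0 1‖ ∧
        HasDerivAt (fun t => ‖q t 0 - q t 1‖) 0 0 ∧
        HasDerivAt (fun t => ‖qh t 0 - qh t 1‖) 0 0 ∧
        ∃ t₀ ∈ Set.Ioo (0 : ℝ) ε, ‖q t₀ 0 - q t₀ 1‖ ≠ ‖qh t₀ 0 - qh t₀ 1‖ := by
  obtain ⟨ε, hε, x, p, hx0, hp0, hx⟩ := exists_radialKepler_local_solution 1 0 one_pos
  obtain ⟨e₀, e₁, h₀, h₁, h₀₁⟩ : ∃ e₀ e₁ : EuclideanSpace ℝ (Fin 3),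
      ‖e₀‖ = 1 ∧ ‖e₁‖ = 1 ∧ inner ℝ e₀ e₁ = 0 :=
    have he := EuclideanSpace.orthonormal_single (ι := Fin 3) (𝕜 := ℝ)
    ⟨_, _, he.1 0, he.1 1, he.2 (by decide : (0 : Fin 3) ≠ 1)⟩
  have hIco : Ico 0 ε ⊆ Ioo (-ε) ε := fun t ht => ⟨by linarith [ht.1], ht.2⟩
  obtain ⟨circ₁, circ₂, circ₃, circ₄⟩ :=
    isTwoBodySolution_uniformCircularMotion h₀ h₁ h₀₁ (Ico 0 ε)
  obtain ⟨rad₁, rad₂, rad₃, rad₄⟩ := isTwoBodySolution_radial h₀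
    (fun t ht => (hx t (hIco ht)).1) (fun t ht => (hx t (hIco ht)).2.1)
    (fun t ht => (hx t (hIco ht)).2.2)
  have hinfall : StrictAntiOn x (Ico 0 ε) :=
    strictAntiOn_Ico_of_hasDerivAt_of_hasDerivAt_neg (fun t ht => (hx t (hIco ht)).2.1)
      (fun t ht => (hx t (hIco ht)).2.2)
      (fun t ht => neg_neg_of_pos (by have := (hx t (hIco ht)).1; positivity)) hp0.le
  have hcirc_sep := norm_uniformCircularMotion h₀ h₁ h₀₁ (1 / 2)
  have hrad_sep : ∀ t ∈ Ioo (-ε) ε, ‖x t • e₀‖ = x t :=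
    fun t ht => by rw [norm_smul, h₀, mul_one, Real.norm_of_nonneg (hx t ht).1.le]
  refine ⟨ε, hε, _, _, _, _, _, _, circ₁, rad₁, circ₂, circ₃, circ₄, rad₂, rad₃, rad₄, ?_, ?_, ?_,
    ε / 2, ⟨by positivity, by linarith⟩, ?_⟩
  · rw [norm_antipodal_sub, norm_antipodal_sub, hcirc_sep, hrad_sep 0 (hIco ⟨le_rfl, hε⟩), hx0]
  · simp only [norm_antipodal_sub, hcirc_sep]
    exact hasDerivAt_const 0 _
  · have h2x : HasDerivAt (fun t => 2 * x t) 0 0 := by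
      simpa [hp0] using ((hx 0 (hIco ⟨le_rfl, hε⟩)).2.1.const_mul 2)
    refine h2x.congr_of_eventuallyEq ?_
    filter_upwards [Ioo_mem_nhds (neg_neg_of_pos hε) hε] with t ht
    simp only [norm_antipodal_sub, hrad_sep t ht]
  · have hmid : ε / 2 ∈ Ico 0 ε := ⟨by positivity, by linarith⟩
    rw [norm_antipodal_sub, norm_antipodal_sub, hcirc_sep, hrad_sep _ (hIco hmid)]
    have := hinfall ⟨le_rfl, hε⟩ hmid (by positivity)
    linarith
end
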